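/- arXiv:cs/9906021 — 2 statements merged into one kernel-verified Lean document; each statement's English description precedes it below -/
import Mathlib

section
/- Let T be an hv-convex polyomino in the m×n grid with every row nonempty and some cell in column 1 and some cell in column n. Then for each row i there exist t_i ∈ {1,…,n} and r_i ≥ 1 such that (i,j) ∈ T iff t_i ≤ j < t_i + r_i; moreover if k is a row with (k,1),(k,n) ∈ T then for all i < k: t_{i+1} ≤ t_i ≤ t_{i+1} + r_{i+1} − r_i, and for all i > k: t_{i-1} ≤ t_i ≤ t_{i-1} + r_{i-1} − r_i. -/
/-- The m×n grid of cells (i,j), 1 ≤ i ≤ m, 1 ≤ j ≤ n. -/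
def grid (m n : ℕ) : Finset (ℕ × ℕ) := Finset.Icc 1 m ×ˢ Finset.Icc 1 n

/-- Number of cells of T in row i (columns 1..n). -/
def rowsum (n : ℕ) (T : Finset (ℕ × ℕ)) (i : ℕ) : ℕ :=
  ((Finset.Icc 1 n).filter (fun j => (i, j) ∈ T)).card

/-- Number of cells of T in column j (rows 1..m). -/
def colsum (m : ℕ) (T : Finset (ℕ × ℕ)) (j : ℕ) : ℕ :=
  ((Finset.Icc 1 m).filter (fun i => (i, j) ∈ T)).card

/-- Horizontally convex: cells in each row are consecutive. -/
def HConvex (T : Finset (ℕ × ℕ)) : Prop :=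
  ∀ i k l j, (i, k) ∈ T → (i, l) ∈ T → k ≤ j → j ≤ l → (i, j) ∈ T

/-- Vertically convex: cells in each column are consecutive. -/
def VConvex (T : Finset (ℕ × ℕ)) : Prop :=
  ∀ j k l i, (k, j) ∈ T → (l, j) ∈ T → k ≤ i → i ≤ l → (i, j) ∈ T

/-- 4-adjacency of distinct cells: |i-i'| + |j-j'| ≤ 1. -/
def Adj (a b : ℕ × ℕ) : Prop :=
  (a.1 = b.1 ∧ (a.2 = b.2 + 1 ∨ b.2 = a.2 + 1)) ∨
  (a.2 = b.2 ∧ (a.1 = b.1 + 1 ∨ b.1 = a.1 + 1))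

/-- T is connected under 4-adjacency. -/
def ConnectedIn (T : Finset (ℕ × ℕ)) : Prop :=
  ∀ a ∈ T, ∀ b ∈ T,
    Relation.ReflTransGen (fun x y => x ∈ T ∧ y ∈ T ∧ Adj x y) a b

/-- A polyomino is a nonempty 4-connected set of cells. -/
def Polyomino (T : Finset (ℕ × ℕ)) : Prop := T.Nonempty ∧ ConnectedIn T

/-- An hv-convex polyomino in the m×n grid. -/
def HvConvexPolyomino (m n : ℕ) (T : Finset (ℕ × ℕ)) : Prop :=
  T ⊆ grid m n ∧ HConvex T ∧ VConvex T ∧ Polyomino T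

/-- Upper-left corner region: closed under moving up and left within the grid. -/
def ULCorner (m n : ℕ) (A : Finset (ℕ × ℕ)) : Prop :=
  A ⊆ grid m n ∧
  ∀ i j, (i, j) ∈ A → (2 ≤ i → (i - 1, j) ∈ A) ∧ (2 ≤ j → (i, j - 1) ∈ A)

/-- Upper-right corner region: closed under moving up and right within the grid. -/
def URCorner (m n : ℕ) (B : Finset (ℕ × ℕ)) : Prop :=
  B ⊆ grid m n ∧
  ∀ i j, (i, j) ∈ B → (2 ≤ i → (i - 1, j) ∈ B) ∧ (j + 1 ≤ n → (i, j + 1) ∈ B)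

/-- Lower-left corner region: closed under moving down and left within the grid. -/
def LLCorner (m n : ℕ) (C : Finset (ℕ × ℕ)) : Prop :=
  C ⊆ grid m n ∧
  ∀ i j, (i, j) ∈ C → (i + 1 ≤ m → (i + 1, j) ∈ C) ∧ (2 ≤ j → (i, j - 1) ∈ C)

/-- Lower-right corner region: closed under moving down and right within the grid. -/
def LRCorner (m n : ℕ) (D : Finset (ℕ × ℕ)) : Prop :=
  D ⊆ grid m n ∧
  ∀ i j, (i, j) ∈ D → (i + 1 ≤ m → (i + 1, j) ∈ D) ∧ (j + 1 ≤ n → (i, j + 1) ∈ D)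

/-- The complement of T in the grid decomposes as four pairwise disjoint corner
regions A, B, C, D satisfying the two diagonal conditions:
(i) (i-1,j-1) ∈ A → (i,j) ∉ D, stated as (i,j) ∈ A → (i+1,j+1) ∉ D, and
(ii) (i-1,j+1) ∈ B → (i,j) ∉ C, stated as (i,j+1) ∈ B → (i+1,j) ∉ C. -/
def CornerDecomp (m n : ℕ) (T A B C D : Finset (ℕ × ℕ)) : Prop :=
  ULCorner m n A ∧ URCorner m n B ∧ LLCorner m n C ∧ LRCorner m n D ∧
  Disjoint A B ∧ Disjoint A C ∧ Disjoint A D ∧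
  Disjoint B C ∧ Disjoint B D ∧ Disjoint C D ∧
  grid m n \ T = A ∪ B ∪ C ∪ D ∧
  (∀ i j, (i, j) ∈ A → (i + 1, j + 1) ∉ D) ∧
  (∀ i j, (i, j + 1) ∈ B → (i + 1, j) ∉ C)

/-!
Each nonempty row of an h-convex set is the interval between its least and greatest column.
If row `k` contains columns `1` and `n`, it is the full row, so by v-convexity every column
of a row `i` is also a column of each row between `i` and `k`; the interval of such a row
therefore contains that of row `i`, which is the pair of inequalities.
-/

lemma mem_grid {m n i j : ℕ} : (i, j) ∈ grid m n ↔ (1 ≤ i ∧ i ≤ m) ∧ (1 ≤ j ∧ j ≤ n) := by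
  simp [grid]

def rowCols (T : Finset (ℕ × ℕ)) (i : ℕ) : Set ℕ := {j | (i, j) ∈ T}

noncomputable def rowStart (T : Finset (ℕ × ℕ)) (i : ℕ) : ℕ := sInf (rowCols T i)

noncomputable def rowEnd (T : Finset (ℕ × ℕ)) (i : ℕ) : ℕ := sSup (rowCols T i)

section Rows

variable {T : Finset (ℕ × ℕ)} {i i' : ℕ}

lemma bddAbove_rowCols (T : Finset (ℕ × ℕ)) (i : ℕ) : BddAbove (rowCols T i) :=
  (T.finite_toSet.image Prod.snd).bddAbove.mono fun _ hj => Set.mem_image_of_mem Prod.snd hj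

lemma rowStart_mem (h : (rowCols T i).Nonempty) : (i, rowStart T i) ∈ T :=
  Nat.sInf_mem h

lemma rowEnd_mem (h : (rowCols T i).Nonempty) : (i, rowEnd T i) ∈ T :=
  Nat.sSup_mem h (bddAbove_rowCols T i)

lemma rowStart_le_rowEnd (h : (rowCols T i).Nonempty) : rowStart T i ≤ rowEnd T i :=
  Nat.sInf_le (rowEnd_mem h)

lemma HConvex.mem_iff_rowStart_le_le_rowEnd (hH : HConvex T) (h : (rowCols T i).Nonempty)
    (j : ℕ) : (i, j) ∈ T ↔ rowStart T i ≤ j ∧ j ≤ rowEnd T i :=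
  ⟨fun hj => ⟨Nat.sInf_le hj, le_csSup (bddAbove_rowCols T i) hj⟩,
    fun hj => hH i _ _ j (rowStart_mem h) (rowEnd_mem h) hj.1 hj.2⟩

lemma rowStart_le_rowStart_of_subset (h : (rowCols T i).Nonempty)
    (hsub : rowCols T i ⊆ rowCols T i') : rowStart T i' ≤ rowStart T i :=
  Nat.sInf_le (hsub (rowStart_mem h))

lemma rowEnd_le_rowEnd_of_subset (h : (rowCols T i).Nonempty)
    (hsub : rowCols T i ⊆ rowCols T i') : rowEnd T i ≤ rowEnd T i' :=
  csSup_le_csSup (bddAbove_rowCols T i') h hsub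

lemma rowCols_subset_of_mem_uIcc {m n k : ℕ} (hsub : T ⊆ grid m n) (hH : HConvex T)
    (hV : VConvex T) (hk1 : (k, 1) ∈ T) (hkn : (k, n) ∈ T) (hi' : i' ∈ Set.uIcc i k) :
    rowCols T i ⊆ rowCols T i' := by
  intro j hj
  have hj_bounds := (mem_grid.1 (hsub hj)).2
  have hkj : (k, j) ∈ T := hH k 1 n j hk1 hkn hj_bounds.1 hj_bounds.2
  rcases Set.mem_uIcc.1 hi' with ⟨hii', hi'k⟩ | ⟨hki', hi'i⟩
  · exact hV j i k i' hj hkj hii' hi'k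
  · exact hV j k i i' hkj hj hki' hi'i

end Rows

theorem stmt5_general (m n : ℕ) (T : Finset (ℕ × ℕ))
    (hT : HvConvexPolyomino m n T)
    (hrows : ∀ i ∈ Finset.Icc 1 m, ∃ j, (i, j) ∈ T) :
    ∃ t r : ℕ → ℕ,
      (∀ i ∈ Finset.Icc 1 m, 1 ≤ t i ∧ t i ≤ n ∧ 1 ≤ r i ∧
        ∀ j, ((i, j) ∈ T ↔ t i ≤ j ∧ j < t i + r i)) ∧
      ∀ k, (k, 1) ∈ T → (k, n) ∈ T →
        (∀ i, 1 ≤ i → i < k → t (i + 1) ≤ t i ∧ t i + r i ≤ t (i + 1) + r (i + 1)) ∧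
        (∀ i, k < i → i ≤ m → t (i - 1) ≤ t i ∧ t i + r i ≤ t (i - 1) + r (i - 1)) := by
  obtain ⟨hsub, hH, hV, -⟩ := hT
  have hne : ∀ i ∈ Finset.Icc 1 m, (rowCols T i).Nonempty := hrows
  refine ⟨rowStart T, fun i => rowEnd T i + 1 - rowStart T i, fun i hi => ?_,
    fun k hk1 hkn => ?_⟩
  · have hcol := (mem_grid.1 (hsub (rowStart_mem (hne i hi)))).2
    have hle := rowStart_le_rowEnd (hne i hi)
    beta_reduce
    refine ⟨hcol.1, hcol.2, by omega, fun j => ?_⟩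
    rw [hH.mem_iff_rowStart_le_le_rowEnd (hne i hi)]
    omega
  have hk := (mem_grid.1 (hsub hk1)).1
  have nested : ∀ i ∈ Finset.Icc 1 m, ∀ i' ∈ Set.uIcc i k,
      rowStart T i' ≤ rowStart T i ∧
        rowStart T i + (rowEnd T i + 1 - rowStart T i) ≤
          rowStart T i' + (rowEnd T i' + 1 - rowStart T i') := by
    intro i hi i' hi'
    have hcols := rowCols_subset_of_mem_uIcc hsub hH hV hk1 hkn hi'
    have := rowStart_le_rowEnd (hne i hi)
    have := rowStart_le_rowEnd ((hne i hi).mono hcols)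
    have := rowStart_le_rowStart_of_subset (hne i hi) hcols
    have := rowEnd_le_rowEnd_of_subset (hne i hi) hcols
    omega
  exact ⟨fun i hi hik => nested i (Finset.mem_Icc.2 ⟨hi, by omega⟩) (i + 1)
      (Set.mem_uIcc.2 (Or.inl ⟨by omega, hik⟩)),
    fun i hki him => nested i (Finset.mem_Icc.2 ⟨by omega, him⟩) (i - 1)
      (Set.mem_uIcc.2 (Or.inr ⟨by omega, by omega⟩))⟩

/-- interval representation of an hv-convex polyomino with nonempty
rows, touching columns 1 and n, and the vertical-convexity inequalities relative
to any row k anchored at both sides. -/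
theorem stmt5 (m n : ℕ) (T : Finset (ℕ × ℕ))
    (hT : HvConvexPolyomino m n T)
    (hrows : ∀ i ∈ Finset.Icc 1 m, ∃ j, (i, j) ∈ T)
    (hc1 : ∃ i, (i, 1) ∈ T) (hcn : ∃ i, (i, n) ∈ T) :
    ∃ t r : ℕ → ℕ,
      (∀ i ∈ Finset.Icc 1 m, 1 ≤ t i ∧ t i ≤ n ∧ 1 ≤ r i ∧
        ∀ j, ((i, j) ∈ T ↔ t i ≤ j ∧ j < t i + r i)) ∧
      ∀ k, (k, 1) ∈ T → (k, n) ∈ T →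
        (∀ i, 1 ≤ i → i < k → t (i + 1) ≤ t i ∧ t i + r i ≤ t (i + 1) + r (i + 1)) ∧
        (∀ i, k < i → i ≤ m → t (i - 1) ≤ t i ∧ t i + r i ≤ t (i - 1) + r (i - 1)) :=
  stmt5_general m n T hT hrows
end

section
/- Conversely, suppose r ∈ ℕ^m with r_k = n for some k, and t_i ∈ {1,…,n−r_i+1} for all i satisfy: for i < k, t_{i+1} ≤ t_i ≤ t_{i+1} + r_{i+1} − r_i, and for i > k, t_{i-1} ≤ t_i ≤ t_{i-1} + r_{i-1} − r_i, with all r_i ≥ 1. Then T = {(i,j) : t_i ≤ j < t_i + r_i} is an hv-convex polyomino with rowsum_i(T) = r_i. -/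
/-! The row intervals `[t i, t i + r i)` grow (under inclusion) from row `1` down to row `k` and
shrink from row `k` on, so the interval of a row lies inside the interval of every row between it
and row `k`. Hence every column meets the set in a segment that reaches row `k`, and since row `k`
is itself a segment, any two cells are joined through row `k`. -/

def AdjIn (T : Finset (ℕ × ℕ)) (x y : ℕ × ℕ) : Prop := x ∈ T ∧ y ∈ T ∧ Adj x y

theorem Adj.symm {a b : ℕ × ℕ} (h : Adj a b) : Adj b a := by
  unfold Adj at *
  omega

instance (T : Finset (ℕ × ℕ)) : Std.Symm (AdjIn T) where
  symm _ _ h := ⟨h.2.1, h.1, h.2.2.symm⟩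

theorem reflTransGen_adjIn_of_path {T : Finset (ℕ × ℕ)} {f : ℕ → ℕ × ℕ}
    (hf : ∀ c, Adj (f c) (f (c + 1))) {a b : ℕ} (hab : a ≤ b)
    (hT : ∀ c, a ≤ c → c ≤ b → f c ∈ T) :
    Relation.ReflTransGen (AdjIn T) (f a) (f b) := by
  induction b, hab using Nat.le_induction with
  | base => rfl
  | succ b hab ih =>
    exact (ih fun c hac hcb => hT c hac (by omega)).tail
      ⟨hT b hab (by omega), hT (b + 1) (by omega) le_rfl, hf b⟩

theorem VConvex.reflTransGen {T : Finset (ℕ × ℕ)} (hT : VConvex T) {a b j : ℕ}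
    (ha : (a, j) ∈ T) (hb : (b, j) ∈ T) : Relation.ReflTransGen (AdjIn T) (a, j) (b, j) := by
  wlog hab : a ≤ b generalizing a b
  · exact symm (this hb ha (by omega))
  exact reflTransGen_adjIn_of_path (f := fun c => (c, j)) (fun _ => Or.inr ⟨rfl, Or.inr rfl⟩)
    hab fun c hac hcb => hT j a b c ha hb hac hcb

theorem HConvex.reflTransGen {T : Finset (ℕ × ℕ)} (hT : HConvex T) {i a b : ℕ}
    (ha : (i, a) ∈ T) (hb : (i, b) ∈ T) : Relation.ReflTransGen (AdjIn T) (i, a) (i, b) := by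
  wlog hab : a ≤ b generalizing a b
  · exact symm (this hb ha (by omega))
  exact reflTransGen_adjIn_of_path (f := fun c => (i, c)) (fun _ => Or.inl ⟨rfl, Or.inr rfl⟩)
    hab fun c hac hcb => hT i a b c ha hb hac hcb

theorem connectedIn_of_hConvex_of_vConvex {T : Finset (ℕ × ℕ)} (hh : HConvex T)
    (hv : VConvex T) (k : ℕ) (hk : ∀ i j, (i, j) ∈ T → (k, j) ∈ T) : ConnectedIn T := by
  rintro ⟨i, j⟩ hij ⟨i', j'⟩ hij'
  exact ((hv.reflTransGen hij (hk i j hij)).trans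
    (hh.reflTransGen (hk i j hij) (hk i' j' hij'))).trans (hv.reflTransGen (hk i' j' hij') hij')

theorem monotoneOn_Ico_of_succ {f g : ℕ → ℕ} {a b : ℕ}
    (h : ∀ i, a ≤ i → i < b → f (i + 1) ≤ f i ∧ g i ≤ g (i + 1)) :
    MonotoneOn (fun i => Set.Ico (f i) (g i)) (Set.Icc a b) := by
  refine monotoneOn_of_le_succ Set.ordConnected_Icc fun i _ hi hi' => ?_
  rw [Order.succ_eq_add_one] at hi' ⊢
  obtain ⟨hf, hg⟩ := h i hi.1 hi'.2
  exact Set.Ico_subset_Ico hf hg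

theorem antitoneOn_Ico_of_pred {f g : ℕ → ℕ} {a b : ℕ}
    (h : ∀ i, a < i → i ≤ b → f (i - 1) ≤ f i ∧ g i ≤ g (i - 1)) :
    AntitoneOn (fun i => Set.Ico (f i) (g i)) (Set.Icc a b) := by
  refine antitoneOn_of_succ_le Set.ordConnected_Icc fun i _ hi hi' => ?_
  rw [Order.succ_eq_add_one] at hi' ⊢
  obtain ⟨hf, hg⟩ := h (i + 1) (Nat.lt_succ_of_le hi.1) hi'.2
  rw [Nat.add_sub_cancel] at hf hg
  exact Set.Ico_subset_Ico hf hg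

section RowIntervals

variable {m n k : ℕ} {t r : ℕ → ℕ}

variable (t r) in
def rowInterval (i : ℕ) : Set ℕ := Set.Ico (t i) (t i + r i)

variable (m n t r) in
def rowIntervals : Finset (ℕ × ℕ) :=
  (grid m n).filter (fun p => t p.1 ≤ p.2 ∧ p.2 < t p.1 + r p.1)

theorem mem_rowIntervals {i j : ℕ} : (i, j) ∈ rowIntervals m n t r ↔
    i ∈ Finset.Icc 1 m ∧ j ∈ Finset.Icc 1 n ∧ j ∈ rowInterval t r i := by
  simp only [rowIntervals, rowInterval, grid, Finset.mem_filter, Finset.mem_product, Set.mem_Ico,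
    and_assoc]

theorem mem_rowIntervals_of_subset {i i' j : ℕ} (hi' : i' ∈ Finset.Icc 1 m)
    (hsub : rowInterval t r i ⊆ rowInterval t r i')
    (h : (i, j) ∈ rowIntervals m n t r) : (i', j) ∈ rowIntervals m n t r := by
  rw [mem_rowIntervals] at h ⊢
  exact ⟨hi', h.2.1, hsub h.2.2⟩

theorem rowsum_rowIntervals {i : ℕ} (hi : i ∈ Finset.Icc 1 m) (ht : 1 ≤ t i)
    (htr : t i + r i ≤ n + 1) : rowsum n (rowIntervals m n t r) i = r i := by
  have hrow : (Finset.Icc 1 n).filter (fun j => (i, j) ∈ rowIntervals m n t r) =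
      Finset.Ico (t i) (t i + r i) := by
    ext j
    simp only [Finset.mem_filter, mem_rowIntervals, hi, true_and, rowInterval, Finset.mem_Icc,
      Set.mem_Ico, Finset.mem_Ico]
    omega
  rw [rowsum, hrow, Nat.card_Ico, Nat.add_sub_cancel_left]

theorem hConvex_rowIntervals : HConvex (rowIntervals m n t r) := by
  intro i a b j ha hb haj hjb
  simp only [mem_rowIntervals, rowInterval, Finset.mem_Icc, Set.mem_Ico] at *
  omega

theorem vConvex_rowIntervals (hmono : MonotoneOn (rowInterval t r) (Set.Icc 1 k))
    (hanti : AntitoneOn (rowInterval t r) (Set.Icc k m)) :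
    VConvex (rowIntervals m n t r) := by
  intro j a b i ha hb hai hib
  have ha' := Finset.mem_Icc.1 (mem_rowIntervals.1 ha).1
  have hb' := Finset.mem_Icc.1 (mem_rowIntervals.1 hb).1
  rcases le_or_gt i k with hik | hki
  · exact mem_rowIntervals_of_subset (Finset.mem_Icc.2 ⟨by omega, by omega⟩)
      (hmono ⟨ha'.1, by omega⟩ ⟨by omega, hik⟩ hai) ha
  · exact mem_rowIntervals_of_subset (Finset.mem_Icc.2 ⟨by omega, by omega⟩)
      (hanti ⟨hki.le, by omega⟩ ⟨by omega, hb'.2⟩ hib) hb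

theorem mem_rowIntervals_row (hmono : MonotoneOn (rowInterval t r) (Set.Icc 1 k))
    (hanti : AntitoneOn (rowInterval t r) (Set.Icc k m))
    (hk : k ∈ Finset.Icc 1 m) {i j : ℕ}
    (h : (i, j) ∈ rowIntervals m n t r) : (k, j) ∈ rowIntervals m n t r := by
  have hi := Finset.mem_Icc.1 (mem_rowIntervals.1 h).1
  have hk' := Finset.mem_Icc.1 hk
  rcases le_or_gt i k with hik | hki
  · exact mem_rowIntervals_of_subset hk (hmono ⟨hi.1, hik⟩ ⟨hk'.1, le_rfl⟩ hik) h
  · exact mem_rowIntervals_of_subset hk (hanti ⟨le_rfl, hk'.2⟩ ⟨hki.le, hi.2⟩ hki.le) h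

theorem hvConvexPolyomino_rowIntervals (hmono : MonotoneOn (rowInterval t r) (Set.Icc 1 k))
    (hanti : AntitoneOn (rowInterval t r) (Set.Icc k m))
    (hk : k ∈ Finset.Icc 1 m) (hrk : 1 ≤ r k)
    (htk : 1 ≤ t k ∧ t k + r k ≤ n + 1) : HvConvexPolyomino m n (rowIntervals m n t r) := by
  have hcell : (k, t k) ∈ rowIntervals m n t r := by
    rw [mem_rowIntervals, rowInterval, Set.mem_Ico]
    exact ⟨hk, Finset.mem_Icc.2 ⟨htk.1, by omega⟩, le_rfl, by omega⟩
  exact ⟨Finset.filter_subset _ _, hConvex_rowIntervals, vConvex_rowIntervals hmono hanti,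
    ⟨_, hcell⟩, connectedIn_of_hConvex_of_vConvex hConvex_rowIntervals
      (vConvex_rowIntervals hmono hanti) k fun _ _ => mem_rowIntervals_row hmono hanti hk⟩

end RowIntervals

theorem stmt6_general (m n k : ℕ) (r t : ℕ → ℕ)
    (hk : k ∈ Finset.Icc 1 m)
    (hr : ∀ i ∈ Finset.Icc 1 m, 1 ≤ r i)
    (ht : ∀ i ∈ Finset.Icc 1 m, 1 ≤ t i ∧ t i + r i ≤ n + 1)
    (hvc1 : ∀ i, 1 ≤ i → i < k → t (i + 1) ≤ t i ∧ t i + r i ≤ t (i + 1) + r (i + 1))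
    (hvc2 : ∀ i, k < i → i ≤ m → t (i - 1) ≤ t i ∧ t i + r i ≤ t (i - 1) + r (i - 1)) :
    HvConvexPolyomino m n ((grid m n).filter (fun p => t p.1 ≤ p.2 ∧ p.2 < t p.1 + r p.1)) ∧
    ∀ i ∈ Finset.Icc 1 m,
      rowsum n ((grid m n).filter (fun p => t p.1 ≤ p.2 ∧ p.2 < t p.1 + r p.1)) i = r i := by
  have hmono : MonotoneOn (rowInterval t r) (Set.Icc 1 k) :=
    monotoneOn_Ico_of_succ (g := fun i => t i + r i) hvc1
  have hanti : AntitoneOn (rowInterval t r) (Set.Icc k m) :=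
    antitoneOn_Ico_of_pred (g := fun i => t i + r i) hvc2
  exact ⟨hvConvexPolyomino_rowIntervals hmono hanti hk (hr k hk) (ht k hk),
    fun i hi => rowsum_rowIntervals hi (ht i hi).1 (ht i hi).2⟩

/-- conversely, intervals satisfying the vertical-convexity
inequalities around a full row k (r k = n) define an hv-convex polyomino with
row sums r. -/
theorem stmt6 (m n k : ℕ) (r t : ℕ → ℕ)
    (hk : k ∈ Finset.Icc 1 m) (hrk : r k = n)
    (hr : ∀ i ∈ Finset.Icc 1 m, 1 ≤ r i)
    (ht : ∀ i ∈ Finset.Icc 1 m, 1 ≤ t i ∧ t i + r i ≤ n + 1)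
    (hvc1 : ∀ i, 1 ≤ i → i < k → t (i + 1) ≤ t i ∧ t i + r i ≤ t (i + 1) + r (i + 1))
    (hvc2 : ∀ i, k < i → i ≤ m → t (i - 1) ≤ t i ∧ t i + r i ≤ t (i - 1) + r (i - 1)) :
    HvConvexPolyomino m n ((grid m n).filter (fun p => t p.1 ≤ p.2 ∧ p.2 < t p.1 + r p.1)) ∧
    ∀ i ∈ Finset.Icc 1 m,
      rowsum n ((grid m n).filter (fun p => t p.1 ≤ p.2 ∧ p.2 < t p.1 + r p.1)) i = r i :=
  stmt6_general m n k r t hk hr ht hvc1 hvc2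
end
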